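/- arXiv:1204.3186 — 5 statements merged into one kernel-verified Lean document; each statement's English description precedes it below -/
import Mathlib

section
/- The probabilities P_x = f_k(x;λ) satisfy the recurrence x·P_x = Σ_{j=1}^{k} j·λ·P_{x-j} for all integers x ≥ 1, where P_y = 0 for y < 0. -/
open scoped BigOperators
open Real

/-- The pmf of the Poisson distribution of order `k` with parameter `lam`,
indexed by `x : ℤ` (it vanishes for `x < 0`):
`f_k(x;λ) = Σ e^{-kλ} λ^{x₁+⋯+x_k}/(x₁!⋯x_k!)` summed over all `k`-tuples of
nonnegative integers with `x₁ + 2x₂ + ⋯ + k x_k = x`. -/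
noncomputable def poissonOrderK (k : ℕ) (lam : ℝ) (x : ℤ) : ℝ :=
  ∑' t : Fin k → ℕ,
    if ((∑ i : Fin k, ((i : ℕ) + 1) * t i : ℕ) : ℤ) = x then
      Real.exp (-(k * lam)) * lam ^ (∑ i : Fin k, t i) /
        ∏ i : Fin k, (Nat.factorial (t i) : ℝ)
    else 0

/-- The difference `Δ_x = P_x - P_{x-1}`. -/
noncomputable def deltaOrderK (k : ℕ) (lam : ℝ) (x : ℤ) : ℝ :=
  poissonOrderK k lam x - poissonOrderK k lam (x - 1)

/-!
Write `P_x = Σ_t c(t)` over the tuples `t` of weight `w(t) = Σ_i i·t_i = x`. For such `t`,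
`x·c(t) = Σ_i i·t_i·c(t)`, and raising `t_i` by one multiplies `c` by `λ / (t_i + 1)` while
raising the weight by `i`. Hence `Σ_{w(t) = x} t_i·c(t) = λ·P_{x-i}`, and summing `i·(…)` over
`i` gives the recurrence.
-/

open Finset Function

@[to_additive]
theorem Finset.prod_update_mul_eq_mul_prod {ι M : Type*} [Fintype ι] [DecidableEq ι]
    [CommMonoid M] (f : ι → ℕ → M) (s : ι → ℕ) (i : ι) (b : ℕ) :
    (∏ j, f j (update s i b j)) * f i (s i) = f i b * ∏ j, f j (s j) := by
  rw [prod_congr rfl fun j _ => apply_update f s i b j, prod_update_of_mem (mem_univ i),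
    prod_eq_mul_prod_sdiff_singleton_of_mem (mem_univ i) fun j => f j (s j)]
  ac_rfl

theorem tsum_eq_tsum_update_succ {ι α : Type*} [DecidableEq ι] [AddCommMonoid α]
    [TopologicalSpace α] (i : ι) {f : (ι → ℕ) → α} (hf : ∀ t, t i = 0 → f t = 0) :
    ∑' t, f t = ∑' s, f (update s i (s i + 1)) := by
  have hleft : LeftInverse (fun t : ι → ℕ => update t i (t i - 1))
      (fun s => update s i (s i + 1)) := fun s => by simp
  refine (hleft.injective.tsum_eq fun t ht => ⟨update t i (t i - 1), ?_⟩).symm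
  have hti : t i ≠ 0 := fun h => ht (hf t h)
  simp [Nat.sub_add_cancel (Nat.one_le_iff_ne_zero.mpr hti)]

namespace PoissonOrderK

variable {k : ℕ}

-- `t i` is the number of parts of size `i + 1`.
def weight (t : Fin k → ℕ) : ℕ := ∑ i : Fin k, ((i : ℕ) + 1) * t i

noncomputable def term (k : ℕ) (lam : ℝ) (t : Fin k → ℕ) : ℝ :=
  Real.exp (-(k * lam)) * lam ^ (∑ i : Fin k, t i) / ∏ i : Fin k, (Nat.factorial (t i) : ℝ)

noncomputable def summand (k : ℕ) (lam : ℝ) (x : ℤ) (t : Fin k → ℕ) : ℝ :=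
  if (weight t : ℤ) = x then term k lam t else 0

theorem _root_.poissonOrderK_eq_tsum_summand (lam : ℝ) (x : ℤ) :
    poissonOrderK k lam x = ∑' t, summand k lam x t := rfl

theorem finite_setOf_weight_eq (x : ℤ) : {t : Fin k → ℕ | (weight t : ℤ) = x}.Finite := by
  refine (Set.finite_Iic fun _ => x.toNat).subset fun t ht i => ?_
  have : t i ≤ weight t :=
    (Nat.le_mul_of_pos_left _ i.succ_pos).trans (single_le_sum (fun _ _ => Nat.zero_le _)
      (f := fun j : Fin k => ((j : ℕ) + 1) * t j) (mem_univ i))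
  change t i ≤ x.toNat
  change (weight t : ℤ) = x at ht
  omega

theorem hasFiniteSupport_summand (lam : ℝ) (x : ℤ) : (summand k lam x).HasFiniteSupport :=
  (finite_setOf_weight_eq x).subset fun _ ht => by_contra fun h => ht (if_neg h)

theorem intCast_mul_summand (lam : ℝ) (x : ℤ) (t : Fin k → ℕ) :
    (x : ℝ) * summand k lam x t = ∑ i : Fin k, ((i : ℕ) + 1 : ℝ) * (t i * summand k lam x t) := by
  unfold summand
  split_ifs with h
  · rw [← h, weight]
    push_cast
    rw [sum_mul]
    exact sum_congr rfl fun i _ => by ring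
  · simp

section Shift

variable (i : Fin k) (s : Fin k → ℕ)

theorem weight_update_succ : weight (update s i (s i + 1)) = weight s + ((i : ℕ) + 1) := by
  have := sum_update_add_eq_add_sum (fun (j : Fin k) n => ((j : ℕ) + 1) * n) s i (s i + 1)
  simp only [weight] at this ⊢
  linarith [mul_add ((i : ℕ) + 1) (s i) 1]

theorem sum_update_succ : ∑ j, update s i (s i + 1) j = ∑ j, s j + 1 := by
  have := sum_update_add_eq_add_sum (fun _ n => n) s i (s i + 1)
  omega

theorem prod_factorial_update_succ :
    ∏ j, ((update s i (s i + 1) j).factorial : ℝ) = (s i + 1) * ∏ j, ((s j).factorial : ℝ) := by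
  have := prod_update_mul_eq_mul_prod (fun _ n => (n.factorial : ℝ)) s i (s i + 1)
  simp only [Nat.factorial_succ, Nat.cast_mul, Nat.cast_succ, mul_assoc] at this
  exact mul_right_cancel₀ (by positivity) (this.trans (by ring))

theorem natCast_succ_mul_term_update_succ (lam : ℝ) :
    (s i + 1 : ℝ) * term k lam (update s i (s i + 1)) = lam * term k lam s := by
  have hfac : ∏ j, ((s j).factorial : ℝ) ≠ 0 := prod_ne_zero_iff.mpr fun j _ => by positivity
  rw [term, term, sum_update_succ, prod_factorial_update_succ, pow_succ]
  field_simp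

theorem natCast_succ_mul_summand_update_succ (lam : ℝ) (x : ℤ) :
    (s i + 1 : ℝ) * summand k lam x (update s i (s i + 1))
      = lam * summand k lam (x - ((i : ℕ) + 1)) s := by
  have hweight : (weight (update s i (s i + 1)) : ℤ) = x ↔ (weight s : ℤ) = x - ((i : ℕ) + 1) := by
    rw [weight_update_succ]
    omega
  unfold summand
  rw [if_congr hweight rfl rfl]
  split_ifs
  · exact natCast_succ_mul_term_update_succ i s lam
  · simp

end Shift

theorem tsum_mul_summand_eq (lam : ℝ) (x : ℤ) (i : Fin k) :
    ∑' t, (t i : ℝ) * summand k lam x t = lam * poissonOrderK k lam (x - ((i : ℕ) + 1)) := by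
  rw [tsum_eq_tsum_update_succ i fun t h => by simp [h], poissonOrderK_eq_tsum_summand,
    ← tsum_mul_left]
  congr 1 with s
  simpa using natCast_succ_mul_summand_update_succ i s lam x

end PoissonOrderK

theorem Fin.sum_univ_succ_eq_sum_Icc {M : Type*} [AddCommMonoid M] (n : ℕ) (f : ℕ → M) :
    ∑ i : Fin n, f (i + 1) = ∑ j ∈ Icc 1 n, f j := by
  rw [Fin.sum_univ_eq_sum_range (fun i => f (i + 1)), range_eq_Ico, sum_Ico_add', zero_add,
    Ico_add_one_right_eq_Icc]

open PoissonOrderK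

theorem poissonOrderK_recurrence_general (k : ℕ) (lam : ℝ) (x : ℤ) :
    (x : ℝ) * poissonOrderK k lam x
      = ∑ j ∈ Finset.Icc 1 k, (j : ℝ) * lam * poissonOrderK k lam (x - (j : ℤ)) := by
  have hsummable (i : Fin k) : Summable fun t => ((i : ℕ) + 1 : ℝ) * (t i * summand k lam x t) :=
    summable_of_hasFiniteSupport <| ((hasFiniteSupport_summand lam x).mul_right _).mul_right _
  calc (x : ℝ) * poissonOrderK k lam x
      = ∑' t, ∑ i : Fin k, ((i : ℕ) + 1 : ℝ) * (t i * summand k lam x t) := by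
        rw [poissonOrderK_eq_tsum_summand, ← tsum_mul_left]
        exact tsum_congr (intCast_mul_summand lam x)
    _ = ∑ i : Fin k, ((i : ℕ) + 1 : ℝ) * lam * poissonOrderK k lam (x - ((i : ℕ) + 1)) := by
        rw [Summable.tsum_finsetSum fun i _ => hsummable i]
        refine sum_congr rfl fun i _ => ?_
        rw [tsum_mul_left, tsum_mul_summand_eq, mul_assoc]
    _ = _ := by
        rw [← Fin.sum_univ_succ_eq_sum_Icc]
        push_cast
        rfl

theorem poissonOrderK_recurrence (k : ℕ) (hk : 1 ≤ k) (lam : ℝ) (hlam : 0 < lam)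
    (x : ℤ) (hx : 1 ≤ x) :
    (x : ℝ) * poissonOrderK k lam x
      = ∑ j ∈ Finset.Icc 1 k, (j : ℝ) * lam * poissonOrderK k lam (x - (j : ℤ)) :=
  poissonOrderK_recurrence_general k lam x
end

section
/- For the Poisson distribution of order 2 with positive integer λ, we have 3·Δ_{3λ} = −2·Δ_{3λ−1}, where Δ_x = P_x − P_{x−1}. -/
open scoped BigOperators
open Real

/-!
Write `P_x` as the sum of the weights `w(t) = e^{-kλ} λ^{t₁+⋯+t_k} / (t₁!⋯t_k!)` over the tuples
`t` of weighted degree `t₁ + 2t₂ + ⋯ + k t_k = x`. Since `t_i w(t) = λ w(t - e_i)`, shifting the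
tuples by `e_i` gives the recurrence `x P_x = λ (P_{x-1} + 2 P_{x-2} + ⋯ + k P_{x-k})`. For `k = 2`
and `x = 3λ` it reads `3λ P_{3λ} = λ P_{3λ-1} + 2λ P_{3λ-2}`; cancelling `λ ≠ 0` and regrouping
gives `3 Δ_{3λ} = -2 Δ_{3λ-1}`.
-/

open Finset Function

theorem sum_apply_update {ι α M : Type*} [Fintype ι] [DecidableEq ι] [AddCommMonoid M]
    (F : ι → α → M) (t : ι → α) (i : ι) (a : α) :
    ∑ j, F j (update t i a j) + F i (t i) = ∑ j, F j (t j) + F i a := by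
  simp_rw [apply_update F t i a]
  rw [sum_update_of_mem (mem_univ i), sum_eq_add_sum_sdiff_singleton_of_mem (mem_univ i)]
  abel

section PoissonOrderK

variable {k : ℕ}

def weightedDegree (t : Fin k → ℕ) : ℕ := ∑ i : Fin k, ((i : ℕ) + 1) * t i

noncomputable def poissonOrderKWeight (k : ℕ) (lam : ℝ) (t : Fin k → ℕ) : ℝ :=
  Real.exp (-(k * lam)) * lam ^ (∑ i, t i) / ∏ i, ((t i).factorial : ℝ)

theorem poissonOrderK_eq_tsum (lam : ℝ) (x : ℤ) :
    poissonOrderK k lam x =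
      ∑' t, if (weightedDegree t : ℤ) = x then poissonOrderKWeight k lam t else 0 :=
  rfl

theorem summable_ite_weightedDegree_eq (f : (Fin k → ℕ) → ℝ) (x : ℤ) :
    Summable fun t => if (weightedDegree t : ℤ) = x then f t else 0 := by
  refine summable_of_hasFiniteSupport <| (Set.finite_Iic fun _ => x.toNat).subset fun t ht i => ?_
  have hdeg : (weightedDegree t : ℤ) = x := by
    by_contra h
    exact ht (if_neg h)
  have hle : t i ≤ weightedDegree t :=
    (Nat.le_mul_of_pos_left _ (Nat.succ_pos _)).trans <|
      single_le_sum (f := fun j : Fin k => ((j : ℕ) + 1) * t j) (fun _ _ => Nat.zero_le _)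
        (mem_univ i)
  change t i ≤ x.toNat
  omega

theorem weightedDegree_update_succ (t : Fin k → ℕ) (i : Fin k) :
    weightedDegree (update t i (t i + 1)) = weightedDegree t + ((i : ℕ) + 1) := by
  have := sum_apply_update (fun (j : Fin k) n => ((j : ℕ) + 1) * n) t i (t i + 1)
  simp only [weightedDegree] at this ⊢
  linarith

theorem succ_mul_poissonOrderKWeight_update (lam : ℝ) (t : Fin k → ℕ) (i : Fin k) :
    ((t i : ℝ) + 1) * poissonOrderKWeight k lam (update t i (t i + 1)) =
      lam * poissonOrderKWeight k lam t := by
  have hsum : ∑ j, update t i (t i + 1) j = ∑ j, t j + 1 := by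
    have := sum_apply_update (fun _ n => n) t i (t i + 1)
    omega
  have hprod : ∏ j, ((update t i (t i + 1) j).factorial : ℝ) =
      ((t i : ℝ) + 1) * ∏ j, ((t j).factorial : ℝ) := by
    simp_rw [apply_update (fun _ n => ((n.factorial : ℕ) : ℝ)) t i (t i + 1)]
    rw [prod_update_of_mem (mem_univ i), prod_eq_mul_prod_sdiff_singleton_of_mem (mem_univ i),
      Nat.factorial_succ]
    push_cast
    ring
  have hfac : ∏ j, ((t j).factorial : ℝ) ≠ 0 := prod_ne_zero_iff.2 fun j _ => by positivity
  rw [poissonOrderKWeight, poissonOrderKWeight, hsum, hprod, pow_succ]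
  field_simp

theorem tsum_ite_weightedDegree_eq_apply_mul (f : (Fin k → ℕ) → ℝ) (x : ℤ) (i : Fin k) :
    ∑' t, (if (weightedDegree t : ℤ) = x then (t i : ℝ) * f t else 0) =
      ∑' t, if (weightedDegree t : ℤ) = x - ((i : ℕ) + 1)
        then ((t i : ℝ) + 1) * f (update t i (t i + 1)) else 0 := by
  have hinj : Injective fun t : Fin k → ℕ => update t i (t i + 1) := by
    intro s t h
    funext j
    have hj := congrFun h j
    by_cases hji : j = i
    · subst hji
      simpa using hj
    · simpa [update_of_ne hji] using hj
  rw [← hinj.tsum_eq]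
  · refine tsum_congr fun t => ?_
    simp [weightedDegree_update_succ, eq_sub_iff_add_eq]
  · intro t ht
    have hti : t i ≠ 0 := by
      rintro h
      simp [h] at ht
    exact ⟨update t i (t i - 1), by simp [Nat.sub_add_cancel (Nat.one_le_iff_ne_zero.2 hti)]⟩

theorem tsum_ite_weightedDegree_eq_apply_mul_weight (lam : ℝ) (x : ℤ) (i : Fin k) :
    ∑' t, (if (weightedDegree t : ℤ) = x then (t i : ℝ) * poissonOrderKWeight k lam t else 0) =
      lam * poissonOrderK k lam (x - ((i : ℕ) + 1)) := by
  rw [tsum_ite_weightedDegree_eq_apply_mul, poissonOrderK_eq_tsum, ← tsum_mul_left]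
  refine tsum_congr fun t => ?_
  split_ifs
  · exact succ_mul_poissonOrderKWeight_update lam t i
  · exact (mul_zero lam).symm

theorem poissonOrderK_recurrence_s8 (lam : ℝ) (x : ℤ) :
    x * poissonOrderK k lam x =
      lam * ∑ i : Fin k, ((i : ℕ) + 1 : ℝ) * poissonOrderK k lam (x - ((i : ℕ) + 1)) := by
  have hsplit : ∀ t : Fin k → ℕ,
      (x : ℝ) * (if (weightedDegree t : ℤ) = x then poissonOrderKWeight k lam t else 0) =
        ∑ i : Fin k, ((i : ℕ) + 1 : ℝ) *
          if (weightedDegree t : ℤ) = x then (t i : ℝ) * poissonOrderKWeight k lam t else 0 := by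
    intro t
    split_ifs with h
    · rw [← h, weightedDegree]
      push_cast
      rw [sum_mul]
      exact sum_congr rfl fun i _ => by ring
    · simp
  calc (x : ℝ) * poissonOrderK k lam x
      = ∑' t, ∑ i : Fin k, ((i : ℕ) + 1 : ℝ) *
          if (weightedDegree t : ℤ) = x then (t i : ℝ) * poissonOrderKWeight k lam t else 0 := by
        rw [poissonOrderK_eq_tsum, ← tsum_mul_left]
        exact tsum_congr hsplit
    _ = ∑ i : Fin k, ((i : ℕ) + 1 : ℝ) * (lam * poissonOrderK k lam (x - ((i : ℕ) + 1))) := by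
        rw [Summable.tsum_finsetSum fun i _ => (summable_ite_weightedDegree_eq _ x).mul_left _]
        simp_rw [tsum_mul_left, tsum_ite_weightedDegree_eq_apply_mul_weight]
    _ = _ := by
        rw [mul_sum]
        exact sum_congr rfl fun i _ => by ring

end PoissonOrderK

theorem poissonOrderK_two_recurrence (lam : ℝ) (x : ℤ) :
    x * poissonOrderK 2 lam x =
      lam * poissonOrderK 2 lam (x - 1) + 2 * lam * poissonOrderK 2 lam (x - 2) := by
  rw [poissonOrderK_recurrence_s8, Fin.sum_univ_two]
  norm_num
  ring

theorem poissonOrder2_delta_relation (lam : ℕ) (hlam : 1 ≤ lam) :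
    3 * deltaOrderK 2 (lam : ℝ) (3 * (lam : ℤ))
      = -2 * deltaOrderK 2 (lam : ℝ) (3 * (lam : ℤ) - 1) := by
  have hrec := poissonOrderK_two_recurrence lam (3 * lam)
  push_cast at hrec
  have hlam₀ : (lam : ℝ) ≠ 0 := Nat.cast_ne_zero.2 (by omega)
  have hthree : 3 * poissonOrderK 2 lam (3 * lam) =
      poissonOrderK 2 lam (3 * lam - 1) + 2 * poissonOrderK 2 lam (3 * lam - 2) :=
    mul_left_cancel₀ hlam₀ (by linear_combination hrec)
  rw [deltaOrderK, deltaOrderK, sub_sub, show (1 + 1 : ℤ) = 2 by norm_num]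
  linear_combination hthree
end

section
/- For every positive integer λ, the Poisson distribution of order 2 has a unique mode equal to 3λ − 1; that is, P_{3λ−1} > P_x for all x ≠ 3λ − 1. -/
open scoped BigOperators
open Real

/-!
Write `P_n = e^{-2λ} q_n` with `q_n = Σ_{a + 2b = n} λ^{a+b} / (a! b!)`, the coefficient of `zⁿ` in
`exp (λz + λz²)`; differentiating gives `(n + 2) q_{n+2} = λ q_{n+1} + 2λ q_n`. Let `ρ_m` be the
positive root of `m x² - λx - 2λ`; it decreases in `m`, and `ρ_{3λ} = 1`. For `λ ≥ 2` the recurrence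
keeps the ratio `r_k = q_{k+1} / q_k` between `ρ_{k+2}` and `ρ_{k+1}`: `r_k ≤ ρ_{k+1}` forces
`r_{k+1} > ρ_{k+3}` (this step needs `λ ≥ 2`), which forces `r_{k+2} < ρ_{k+3}`. Hence `q` increases
while `k + 2 ≤ 3λ` and decreases once `k + 1 ≥ 3λ`. For `λ = 1` the mode is `2`, and the decrease
after it follows from the invariant `q_{k+1} < q_k ∧ 2λ q_k < (k + 2 - λ) q_{k+1}`, which the
recurrence preserves for every `λ > 0`.
-/

open Finset
open scoped Nat

noncomputable def poissonTwoWeight (l : ℝ) (a b : ℕ) : ℝ :=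
  l ^ (a + b) / (a ! * b !)

noncomputable def poissonTwoCoeff (l : ℝ) (n : ℕ) : ℝ :=
  ∑ j ∈ range (n / 2 + 1), poissonTwoWeight l (n - 2 * j) j

lemma poissonOrderK_two_natCast (l : ℝ) (n : ℕ) :
    poissonOrderK 2 l n = exp (-(2 * l)) * poissonTwoCoeff l n := by
  classical
  let pair : ℕ → Fin 2 → ℕ := fun j ↦ ![n - 2 * j, j]
  have hpair : Function.Injective pair := fun i j h ↦ by simpa [pair] using congrFun h 1
  rw [poissonOrderK, tsum_eq_sum (s := (range (n / 2 + 1)).image pair), sum_image hpair.injOn,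
    poissonTwoCoeff, mul_sum]
  · refine sum_congr rfl fun j hj ↦ ?_
    have h2j : 2 * j ≤ n := by rw [mem_range] at hj; omega
    simp only [pair, Fin.sum_univ_two, Fin.prod_univ_two, Matrix.cons_val_zero,
      Matrix.cons_val_one, Fin.val_zero, Fin.val_one]
    rw [if_pos (by push_cast; omega), poissonTwoWeight]
    push_cast
    ring
  · intro t ht
    refine if_neg fun hsum ↦ ht (mem_image.mpr ⟨t 1, ?_, ?_⟩)
    all_goals simp only [Fin.sum_univ_two, Fin.val_zero, Fin.val_one] at hsum
    · rw [mem_range]; omega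
    · ext i; fin_cases i <;> simp [pair]; omega

section Recurrence

variable (l : ℝ)

lemma succ_mul_poissonTwoWeight_succ_left (a b : ℕ) :
    (a + 1 : ℝ) * poissonTwoWeight l (a + 1) b = l * poissonTwoWeight l a b := by
  simp only [poissonTwoWeight, Nat.factorial_succ, Nat.cast_mul, Nat.succ_add, pow_succ]
  push_cast
  field_simp

lemma succ_mul_poissonTwoWeight_succ_right (a b : ℕ) :
    (b + 1 : ℝ) * poissonTwoWeight l a (b + 1) = l * poissonTwoWeight l a b := by
  simp only [poissonTwoWeight, Nat.factorial_succ, Nat.cast_mul, Nat.add_succ, pow_succ]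
  push_cast
  field_simp

lemma poissonTwoCoeff_succ_succ (n : ℕ) :
    (n + 2 : ℝ) * poissonTwoCoeff l (n + 2) =
      l * poissonTwoCoeff l (n + 1) + 2 * l * poissonTwoCoeff l n := by
  have hsplit : (n + 2 : ℝ) * poissonTwoCoeff l (n + 2) =
      ∑ j ∈ range (n / 2 + 2), ((n + 2 - 2 * j : ℕ) : ℝ) * poissonTwoWeight l (n + 2 - 2 * j) j +
        ∑ j ∈ range (n / 2 + 2), (2 * j : ℝ) * poissonTwoWeight l (n + 2 - 2 * j) j := by
    rw [poissonTwoCoeff, show (n + 2) / 2 + 1 = n / 2 + 2 by omega, mul_sum, ← sum_add_distrib]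
    refine sum_congr rfl fun j hj ↦ ?_
    rw [← add_mul, Nat.cast_sub (by rw [mem_range] at hj; omega)]
    push_cast
    ring
  have hleft : ∑ j ∈ range (n / 2 + 2), ((n + 2 - 2 * j : ℕ) : ℝ) *
      poissonTwoWeight l (n + 2 - 2 * j) j = l * poissonTwoCoeff l (n + 1) := by
    rw [poissonTwoCoeff, mul_sum,
      ← sum_subset (range_subset_range.mpr (show (n + 1) / 2 + 1 ≤ n / 2 + 2 by omega))]
    · refine sum_congr rfl fun j hj ↦ ?_
      rw [mem_range] at hj
      rw [show n + 2 - 2 * j = n + 1 - 2 * j + 1 by omega, Nat.cast_succ,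
        succ_mul_poissonTwoWeight_succ_left]
    · intro j _ hj
      rw [mem_range] at hj
      rw [show n + 2 - 2 * j = 0 by omega, Nat.cast_zero, zero_mul]
  have hright : ∑ j ∈ range (n / 2 + 2), (2 * j : ℝ) * poissonTwoWeight l (n + 2 - 2 * j) j =
      2 * l * poissonTwoCoeff l n := by
    rw [sum_range_succ', poissonTwoCoeff, mul_sum]
    simp only [Nat.cast_zero, mul_zero, zero_mul, add_zero]
    refine sum_congr rfl fun j _ ↦ ?_
    rw [show n + 2 - 2 * (j + 1) = n - 2 * j by omega, Nat.cast_succ, mul_assoc,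
      succ_mul_poissonTwoWeight_succ_right, mul_assoc]
  rw [hsplit, hleft, hright]

lemma poissonTwoCoeff_zero : poissonTwoCoeff l 0 = 1 := by
  simp [poissonTwoCoeff, poissonTwoWeight]

lemma poissonTwoCoeff_one : poissonTwoCoeff l 1 = l := by
  simp [poissonTwoCoeff, poissonTwoWeight]

lemma poissonTwoCoeff_two : poissonTwoCoeff l 2 = (l ^ 2 + 2 * l) / 2 := by
  have h := poissonTwoCoeff_succ_succ l 0
  rw [poissonTwoCoeff_zero, poissonTwoCoeff_one] at h
  push_cast at h
  linarith

variable {l} in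
lemma poissonTwoCoeff_pos (hl : 0 < l) (n : ℕ) : 0 < poissonTwoCoeff l n :=
  sum_pos (fun j _ ↦ by unfold poissonTwoWeight; positivity) ⟨0, by simp⟩

end Recurrence

/-- `ratioForm l m a b = a² g (b / a)` for `g x = m x² - l x - 2 l`. -/
def ratioForm (l m a b : ℝ) : ℝ :=
  m * b ^ 2 - l * a * b - 2 * l * a ^ 2

section RatioForm

variable {l m a b c : ℝ}

lemma ratioForm_neg_of_pos (hl : 0 < l) (hm : 0 < m) (hrec : m * c = l * b + 2 * l * a)
    (h : 0 < ratioForm l m a b) : ratioForm l m b c < 0 := by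
  have key : m * ratioForm l m b c = -(2 * l) * ratioForm l m a b := by
    unfold ratioForm; linear_combination (m * c + 2 * l * a) * hrec
  have : m * ratioForm l m b c < 0 := by
    rw [key]; exact mul_neg_of_neg_of_pos (by linarith) h
  exact neg_of_mul_neg_right this hm.le

lemma ratioForm_pos_of_nonpos (hl : 2 ≤ l) (hm : 0 < m) (ha : 0 < a) (hb : 0 < b)
    (hrec : m * c = l * b + 2 * l * a) (h : ratioForm l (m - 1) a b ≤ 0) :
    0 < ratioForm l (m + 1) b c := by
  have key : m ^ 2 * ratioForm l (m + 1) b c =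
      l * (-(2 * (m + 1)) * ratioForm l (m - 1) a b + (l - 2) * b ^ 2 + 2 * l * a * b) := by
    unfold ratioForm
    linear_combination ((m + 1) * (m * c + l * b + 2 * l * a) - l * b * m) * hrec
  have : 0 < m ^ 2 * ratioForm l (m + 1) b c := by
    have : 0 ≤ -(2 * (m + 1)) * ratioForm l (m - 1) a b :=
      mul_nonneg_of_nonpos_of_nonpos (by linarith) h
    rw [key]
    nlinarith [mul_nonneg (sub_nonneg.2 hl) (sq_nonneg b),
      mul_pos (mul_pos ha hb) (by positivity : 0 < 2 * l)]
  exact pos_of_mul_pos_right this (by positivity)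

lemma lt_of_ratioForm_pos (hl : 0 ≤ l) (ha : 0 ≤ a) (hb : 0 ≤ b) (hm : m ≤ 3 * l)
    (h : 0 < ratioForm l m a b) : a < b := by
  by_contra! hba
  have : ratioForm l m a b ≤ l * ((b - a) * (3 * b + 2 * a)) := by
    unfold ratioForm; nlinarith [mul_nonneg (sub_nonneg.2 hm) (sq_nonneg b)]
  nlinarith [mul_nonneg hl (mul_nonneg (sub_nonneg.2 hba) (by positivity : 0 ≤ 3 * b + 2 * a))]

lemma lt_of_ratioForm_neg (hl : 0 ≤ l) (ha : 0 ≤ a) (hb : 0 ≤ b) (hm : 3 * l ≤ m)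
    (h : ratioForm l m a b < 0) : b < a := by
  by_contra! hab
  have : l * ((b - a) * (3 * b + 2 * a)) ≤ ratioForm l m a b := by
    unfold ratioForm; nlinarith [mul_nonneg (sub_nonneg.2 hm) (sq_nonneg b)]
  nlinarith [mul_nonneg hl (mul_nonneg (sub_nonneg.2 hab) (by positivity : 0 ≤ 3 * b + 2 * a))]

end RatioForm

section Sequence

variable {l : ℝ}

local notation "q" => poissonTwoCoeff l

lemma ratioForm_poissonTwoCoeff_pos_of_nonpos (hl : 2 ≤ l) {k : ℕ}
    (h : ratioForm l (k + 1) (q k) (q (k + 1)) ≤ 0) :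
    0 < ratioForm l (k + 3) (q (k + 1)) (q (k + 2)) := by
  have hl0 : 0 < l := by linarith
  have := ratioForm_pos_of_nonpos hl (m := k + 2) (by positivity) (poissonTwoCoeff_pos hl0 k)
    (poissonTwoCoeff_pos hl0 (k + 1)) (poissonTwoCoeff_succ_succ l k) (by convert h using 2; ring)
  convert this using 2; ring

lemma ratioForm_poissonTwoCoeff_neg_of_pos (hl : 0 < l) {k : ℕ}
    (h : 0 < ratioForm l (k + 3) (q (k + 1)) (q (k + 2))) :
    ratioForm l (k + 3) (q (k + 2)) (q (k + 3)) < 0 := by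
  have hrec := poissonTwoCoeff_succ_succ l (k + 1)
  push_cast at hrec
  exact ratioForm_neg_of_pos hl (by positivity) (by linear_combination hrec) h

lemma ratioForm_poissonTwoCoeff_nonpos (hl : 2 ≤ l) (k : ℕ) :
    ratioForm l (k + 1) (q k) (q (k + 1)) ≤ 0 := by
  induction k using Nat.twoStepInduction with
  | zero =>
    norm_num [ratioForm, poissonTwoCoeff_zero, poissonTwoCoeff_one]
    linarith
  | one =>
    norm_num [ratioForm, poissonTwoCoeff_one, poissonTwoCoeff_two]
    nlinarith
  | more k ih _ =>
    have := ratioForm_poissonTwoCoeff_neg_of_pos (by linarith)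
      (ratioForm_poissonTwoCoeff_pos_of_nonpos hl ih)
    rw [show ((k + 2 : ℕ) : ℝ) + 1 = k + 3 by push_cast; ring]
    exact this.le

lemma poissonTwoCoeff_lt_succ (hl : 2 ≤ l) {k : ℕ} (hk : k + 2 ≤ 3 * l) : q k < q (k + 1) := by
  have hl0 : 0 < l := by linarith
  cases k with
  | zero => simpa [poissonTwoCoeff_zero, poissonTwoCoeff_one] using (by linarith : 1 < l)
  | succ j =>
    refine lt_of_ratioForm_pos hl0.le (poissonTwoCoeff_pos hl0 _).le (poissonTwoCoeff_pos hl0 _).le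
      ?_ (ratioForm_poissonTwoCoeff_pos_of_nonpos hl (ratioForm_poissonTwoCoeff_nonpos hl j))
    push_cast at hk; linarith

lemma poissonTwoCoeff_succ_lt (hl : 2 ≤ l) {k : ℕ} (hk : 3 * l ≤ k + 1) : q (k + 1) < q k := by
  have hl0 : 0 < l := by linarith
  obtain ⟨j, rfl⟩ := Nat.exists_eq_add_of_le' (by exact_mod_cast (by linarith : (2 : ℝ) ≤ k))
  refine lt_of_ratioForm_neg hl0.le (poissonTwoCoeff_pos hl0 _).le (poissonTwoCoeff_pos hl0 _).le
    ?_ (ratioForm_poissonTwoCoeff_neg_of_pos hl0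
      (ratioForm_poissonTwoCoeff_pos_of_nonpos hl (ratioForm_poissonTwoCoeff_nonpos hl j)))
  push_cast at hk; linarith

lemma poissonTwoCoeff_tail_step (hl : 0 < l) {n : ℕ}
    (h : q (n + 1) < q n ∧ 2 * l * q n < ((n + 2 : ℕ) - l) * q (n + 1)) :
    q (n + 2) < q (n + 1) ∧ 2 * l * q (n + 1) < ((n + 3 : ℕ) - l) * q (n + 2) := by
  obtain ⟨hdec, hratio⟩ := h
  have hrec := poissonTwoCoeff_succ_succ l n
  have hq := poissonTwoCoeff_pos hl (n + 1)
  push_cast at hratio ⊢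
  constructor
  · nlinarith
  · have hgrowth : 3 * l * q (n + 1) < (n + 2) * q (n + 2) := by nlinarith
    nlinarith

end Sequence

lemma poissonTwoCoeff_one_succ_lt {n : ℕ} (hn : 2 ≤ n) :
    poissonTwoCoeff 1 (n + 1) < poissonTwoCoeff 1 n ∧
      2 * 1 * poissonTwoCoeff 1 n < ((n + 2 : ℕ) - 1) * poissonTwoCoeff 1 (n + 1) := by
  induction n, hn using Nat.le_induction with
  | base =>
    have hrec := poissonTwoCoeff_succ_succ 1 1
    rw [poissonTwoCoeff_one, poissonTwoCoeff_two] at hrec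
    rw [poissonTwoCoeff_two]
    norm_num at hrec ⊢
    constructor <;> linarith
  | succ n _ ih =>
    exact poissonTwoCoeff_tail_step one_pos ih

lemma poissonTwoCoeff_one_lt_two {n : ℕ} (hn : n ≠ 2) :
    poissonTwoCoeff 1 n < poissonTwoCoeff 1 2 := by
  rcases (by omega : n < 2 ∨ 2 < n) with hlt | hgt
  · interval_cases n <;> norm_num [poissonTwoCoeff_zero, poissonTwoCoeff_one, poissonTwoCoeff_two]
  · exact Nat.rel_of_forall_rel_succ_of_le_of_lt (· > ·)
      (fun k hk ↦ (poissonTwoCoeff_one_succ_lt hk).1) le_rfl hgt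

lemma lt_of_lt_succ_of_succ_lt {α : Type*} [Preorder α] {f : ℕ → α} {m n : ℕ}
    (hinc : ∀ k < m, f k < f (k + 1)) (hdec : ∀ k, m ≤ k → f (k + 1) < f k) (hn : n ≠ m) :
    f n < f m := by
  rcases Nat.lt_or_gt_of_ne hn with hlt | hgt
  · exact strictMonoOn_Iic_of_lt_succ (fun k hk ↦ (Order.succ_eq_add_one k).symm ▸ hinc k hk)
      (Set.mem_Iic.mpr hlt.le) Set.self_mem_Iic hlt
  · exact Nat.rel_of_forall_rel_succ_of_le_of_lt (· > ·) hdec le_rfl hgt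

lemma poissonTwoCoeff_lt_mode {lam : ℕ} (hlam : 1 ≤ lam) {n : ℕ} (hn : n ≠ 3 * lam - 1) :
    poissonTwoCoeff lam n < poissonTwoCoeff lam (3 * lam - 1) := by
  rcases (by omega : lam = 1 ∨ 2 ≤ lam) with rfl | hlam
  · simpa using poissonTwoCoeff_one_lt_two hn
  · have hl : (2 : ℝ) ≤ lam := by exact_mod_cast hlam
    refine lt_of_lt_succ_of_succ_lt (fun k hk ↦ poissonTwoCoeff_lt_succ hl ?_)
      (fun k hk ↦ poissonTwoCoeff_succ_lt hl ?_) hn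
    · exact_mod_cast (by omega : k + 2 ≤ 3 * lam)
    · exact_mod_cast (by omega : 3 * lam ≤ k + 1)

theorem poissonOrder2_mode (lam : ℕ) (hlam : 1 ≤ lam) :
    ∀ x : ℤ, 0 ≤ x → x ≠ 3 * (lam : ℤ) - 1 →
      poissonOrderK 2 (lam : ℝ) x < poissonOrderK 2 (lam : ℝ) (3 * (lam : ℤ) - 1) := by
  intro x hx hx_ne
  lift x to ℕ using hx
  rw [show 3 * (lam : ℤ) - 1 = ((3 * lam - 1 : ℕ) : ℤ) by omega, poissonOrderK_two_natCast,
    poissonOrderK_two_natCast]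
  exact mul_lt_mul_of_pos_left (poissonTwoCoeff_lt_mode hlam (by omega)) (exp_pos _)
end

section
/- For the Poisson distribution of order 6 with λ = 2, one has f_6(40;2) > f_6(39;2); in particular the mode is not 39 = 2·6·7/2 − ⌊6/2⌋, refuting the Philippou–Saghafi conjecture for k = 6, λ = 2. -/
open scoped BigOperators
open Real

/-!
Writing `f_k(x;λ) = e^{-kλ} c_k(x)`, split each tuple according to its last entry `m = x_k`:
the remaining entries form a tuple of order `k - 1` and weight `x - k m`, so
`c_k(x) = Σ_{m ≤ x/k} λ^m/m! · c_{k-1}(x - k m)` with `c_0(x) = [x = 0]`.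
For rational `λ` this recursion computes `c_6(39;2)` and `c_6(40;2)` exactly in `ℚ`,
and the kernel compares them.
-/

open Finset

def orderWeight {k : ℕ} (t : Fin k → ℕ) : ℕ := ∑ i : Fin k, ((i : ℕ) + 1) * t i

noncomputable def poissonOrderKTerm (lam : ℝ) (x : ℕ) {k : ℕ} (t : Fin k → ℕ) : ℝ :=
  if orderWeight t = x then lam ^ (∑ i, t i) / ∏ i, ((t i).factorial : ℝ) else 0

noncomputable def poissonOrderKMass (k : ℕ) (lam : ℝ) (x : ℕ) : ℝ :=
  ∑' t : Fin k → ℕ, poissonOrderKTerm lam x t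

lemma poissonOrderK_natCast (k : ℕ) (lam : ℝ) (x : ℕ) :
    poissonOrderK k lam x = exp (-(k * lam)) * poissonOrderKMass k lam x := by
  rw [poissonOrderK, poissonOrderKMass, ← tsum_mul_left]
  congr 1 with t
  by_cases h : orderWeight t = x
  · rw [poissonOrderKTerm, if_pos (by exact_mod_cast h), if_pos h, mul_div_assoc]
  · rw [poissonOrderKTerm, if_neg (by exact_mod_cast h), if_neg h, mul_zero]

lemma finite_setOf_orderWeight_eq (k x : ℕ) :
    {t : Fin k → ℕ | orderWeight t = x}.Finite := by
  refine (Set.Finite.pi fun _ => Set.finite_Iic x).subset fun t ht i _ => ?_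
  calc t i ≤ ((i : ℕ) + 1) * t i := Nat.le_mul_of_pos_left _ i.val.succ_pos
    _ ≤ orderWeight t := single_le_sum (f := fun i : Fin k => ((i : ℕ) + 1) * t i)
          (fun _ _ => Nat.zero_le _) (mem_univ i)
    _ = x := ht

lemma summable_poissonOrderKTerm (k : ℕ) (lam : ℝ) (x : ℕ) :
    Summable (poissonOrderKTerm lam x : (Fin k → ℕ) → ℝ) :=
  summable_of_hasFiniteSupport <| (finite_setOf_orderWeight_eq k x).subset
    fun _ ht => by_contra fun h => ht (if_neg h)

lemma orderWeight_snoc {k : ℕ} (t : Fin k → ℕ) (m : ℕ) :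
    orderWeight (Fin.snoc t m : Fin (k + 1) → ℕ) = orderWeight t + (k + 1) * m := by
  simp [orderWeight, Fin.sum_univ_castSucc]

lemma poissonOrderKTerm_snoc (lam : ℝ) (x : ℕ) {k : ℕ} (t : Fin k → ℕ) (m : ℕ) :
    poissonOrderKTerm lam x (Fin.snoc t m : Fin (k + 1) → ℕ) =
      if (k + 1) * m ≤ x then lam ^ m / m.factorial * poissonOrderKTerm lam (x - (k + 1) * m) t
      else 0 := by
  simp only [poissonOrderKTerm, orderWeight_snoc, Fin.sum_snoc, Fin.prod_univ_castSucc,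
    Fin.snoc_castSucc, Fin.snoc_last]
  by_cases hm : (k + 1) * m ≤ x
  · have hw : orderWeight t + (k + 1) * m = x ↔ orderWeight t = x - (k + 1) * m := by omega
    simp only [if_pos hm, hw]
    split_ifs
    · field_simp
      ring
    · rw [mul_zero]
  · rw [if_neg hm, if_neg (by omega)]

lemma poissonOrderKMass_zero (lam : ℝ) (x : ℕ) :
    poissonOrderKMass 0 lam x = if x = 0 then 1 else 0 := by
  simp [poissonOrderKMass, poissonOrderKTerm, orderWeight, tsum_fintype, eq_comm]

lemma poissonOrderKMass_succ (k : ℕ) (lam : ℝ) (x : ℕ) :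
    poissonOrderKMass (k + 1) lam x = ∑ m ∈ range (x / (k + 1) + 1),
      lam ^ m / m.factorial * poissonOrderKMass k lam (x - (k + 1) * m) := by
  let e := Fin.snocEquiv fun _ : Fin (k + 1) => ℕ
  have fiber (m : ℕ) : ∑' t, poissonOrderKTerm lam x (e (m, t)) =
      if (k + 1) * m ≤ x then lam ^ m / m.factorial * poissonOrderKMass k lam (x - (k + 1) * m)
      else 0 := by
    have he (t : Fin k → ℕ) : e (m, t) = Fin.snoc t m := rfl
    simp only [he, poissonOrderKTerm_snoc]
    split_ifs
    · exact tsum_mul_left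
    · exact tsum_zero
  have hs : Summable fun p => poissonOrderKTerm lam x (e p) :=
    (summable_poissonOrderKTerm _ lam x).comp_injective e.injective
  have hmem (m : ℕ) : m ∈ range (x / (k + 1) + 1) ↔ (k + 1) * m ≤ x := by
    rw [mem_range, Nat.lt_succ_iff, Nat.le_div_iff_mul_le k.succ_pos, mul_comm]
  rw [poissonOrderKMass, ← e.tsum_eq, hs.tsum_prod, tsum_congr fiber,
    tsum_eq_sum fun m hm => if_neg (mt (hmem m).2 hm)]
  exact sum_congr rfl fun m hm => if_pos ((hmem m).1 hm)

def poissonOrderKMassRat : ℕ → ℚ → ℕ → ℚ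
  | 0, _, x => if x = 0 then 1 else 0
  | k + 1, lam, x => ∑ m ∈ range (x / (k + 1) + 1),
      lam ^ m / m.factorial * poissonOrderKMassRat k lam (x - (k + 1) * m)

lemma poissonOrderKMass_ratCast (k : ℕ) (lam : ℚ) (x : ℕ) :
    poissonOrderKMass k lam x = poissonOrderKMassRat k lam x := by
  induction k generalizing x with
  | zero => simp [poissonOrderKMass_zero, poissonOrderKMassRat, apply_ite]
  | succ k ih => simp [poissonOrderKMass_succ, poissonOrderKMassRat, ih]

theorem poissonOrderKMassRat_6_2_39_lt_40 :
    poissonOrderKMassRat 6 2 39 < poissonOrderKMassRat 6 2 40 := by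
  decide +kernel

theorem poissonOrder6_counterexample :
    poissonOrderK 6 2 39 < poissonOrderK 6 2 40 := by
  have h : poissonOrderKMass 6 2 39 < poissonOrderKMass 6 2 40 := by
    simpa [← poissonOrderKMass_ratCast] using
      (Rat.cast_lt (K := ℝ)).2 poissonOrderKMassRat_6_2_39_lt_40
  rw [show (39 : ℤ) = (39 : ℕ) from rfl, show (40 : ℤ) = (40 : ℕ) from rfl,
    poissonOrderK_natCast, poissonOrderK_natCast]
  exact mul_lt_mul_of_pos_left h (exp_pos _)
end

section
/- For every integer λ ≥ 1, Δ_{3λ−1} = P_{3λ−1} − P_{3λ−2} > 0 for the Poisson distribution of order 2 with parameter λ. -/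
open scoped BigOperators
open Real

/-!
Write `P_N = e^{-2λ} c_N` with `c_N = ∑_{a + 2b = N} λ^{a+b} / (a! b!)`. Splitting `N = a + 2b`
gives `(N + 2) c_{N+2} = λ c_{N+1} + 2λ c_N`, so the ratios `ρ_m = (m + 1) c_{m+1} / c_m` obey
`ρ_{m+1} = λ + 2λ(m + 1) / ρ_m`. Let `φ(m)` be the fixed point of `x ↦ λ + 2λm / x`. Since that map
is decreasing, `ρ_m ≤ φ(m + 1)` forces `ρ_{m+1} ≥ φ(m + 1)`, and one more step brings `ρ_{m+2}` back
below `φ(m + 3)` as soon as `φ(m + 1) ≥ 2`. For `λ ≥ 2` this gives `ρ_m ≤ φ(m + 1)` for all `m`,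
hence `ρ_{3λ-2} ≥ φ(3λ - 2) > 3λ - 1`, which is `c_{3λ-1} > c_{3λ-2}`. For `λ = 1`, `ρ_1 = 3 > 2`.
-/

open Finset
open scoped Nat

/-- The positive root of `x ^ 2 = L * x + 2 * L * m`. -/
noncomputable def posRoot (L m : ℝ) : ℝ := (L + √(L ^ 2 + 8 * L * m)) / 2

section posRoot

variable {L m : ℝ}

lemma posRoot_sq (hL : 0 ≤ L) (hm : 0 ≤ m) : posRoot L m ^ 2 = L * posRoot L m + 2 * L * m := by
  have h := Real.sq_sqrt (show 0 ≤ L ^ 2 + 8 * L * m by positivity)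
  unfold posRoot
  linear_combination h / 4

lemma posRoot_pos (hL : 0 < L) (hm : 0 ≤ m) : 0 < posRoot L m := by
  unfold posRoot
  positivity

lemma le_posRoot_of_sq_le {y : ℝ} (h : y ^ 2 ≤ L * y + 2 * L * m) : y ≤ posRoot L m := by
  have := Real.abs_le_sqrt (show (2 * y - L) ^ 2 ≤ L ^ 2 + 8 * L * m by linarith)
  unfold posRoot
  linarith [le_abs_self (2 * y - L)]

lemma lt_posRoot_of_sq_lt {y : ℝ} (h : y ^ 2 < L * y + 2 * L * m) : y < posRoot L m := by
  have := (Real.lt_sqrt (abs_nonneg (2 * y - L))).2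
    (show |2 * y - L| ^ 2 < L ^ 2 + 8 * L * m by rw [sq_abs]; linarith)
  unfold posRoot
  linarith [le_abs_self (2 * y - L)]

lemma add_div_posRoot (hL : 0 < L) (hm : 0 ≤ m) : L + 2 * L * m / posRoot L m = posRoot L m := by
  have hp := posRoot_pos hL hm
  rw [eq_comm, ← sub_eq_iff_eq_add', eq_div_iff hp.ne']
  linear_combination posRoot_sq hL.le hm

lemma add_div_posRoot_le (hL : 0 < L) (hm : 0 ≤ m) (h2 : 2 ≤ posRoot L m) :
    L + 2 * L * (m + 1) / posRoot L m ≤ posRoot L (m + 2) := by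
  set p := posRoot L m
  have hp : 0 < p := by linarith
  have hsq : p ^ 2 = L * p + 2 * L * m := posRoot_sq hL.le hm
  have key : L * (L + 2 * L * (m + 1) / p) + 2 * L * (m + 2) - (L + 2 * L * (m + 1) / p) ^ 2
      = 2 * L ^ 2 * (p - 2) / p ^ 2 := by
    field_simp
    linear_combination 2 * (m + 2) * hsq
  apply le_posRoot_of_sq_le
  have : 0 ≤ 2 * L ^ 2 * (p - 2) / p ^ 2 := by
    have : 0 ≤ p - 2 := by linarith
    positivity
  linarith

end posRoot

def order2Index (N : ℕ) : Finset (ℕ × ℕ) :=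
  (range (N + 1) ×ˢ range (N + 1)).filter fun p => p.1 + 2 * p.2 = N

@[simp]
lemma mem_order2Index {N : ℕ} {p : ℕ × ℕ} : p ∈ order2Index N ↔ p.1 + 2 * p.2 = N := by
  simp only [order2Index, mem_filter, mem_product, mem_range, and_iff_right_iff_imp]
  omega

lemma sum_order2Index_shift {β : Type*} [AddCommMonoid β] {f : ℕ × ℕ → β} (N i j : ℕ)
    (hf : ∀ p : ℕ × ℕ, p.1 < i ∨ p.2 < j → f p = 0) :
    ∑ p ∈ order2Index (N + i + 2 * j), f p = ∑ p ∈ order2Index N, f (p.1 + i, p.2 + j) := by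
  let shift : ℕ × ℕ → ℕ × ℕ := fun p => (p.1 + i, p.2 + j)
  have shift_inj : Set.InjOn shift (order2Index N) := fun p _ q _ h => by
    simp only [shift, Prod.ext_iff] at h ⊢
    omega
  rw [← sum_image shift_inj]
  refine (sum_subset (fun q hq => ?_) fun q hq hq' => hf q ?_).symm
  · obtain ⟨p, hp, rfl⟩ := mem_image.1 hq
    simp only [mem_order2Index, shift] at hp ⊢
    omega
  · by_contra! h
    refine hq' (mem_image.2 ⟨(q.1 - i, q.2 - j), ?_, ?_⟩)
    · simp only [mem_order2Index] at hq ⊢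
      omega
    · simp only [shift, Prod.ext_iff]
      omega

noncomputable def order2Term (L : ℝ) (p : ℕ × ℕ) : ℝ := L ^ (p.1 + p.2) / (p.1 ! * p.2 ! : ℝ)

noncomputable def order2Coeff (L : ℝ) (N : ℕ) : ℝ := ∑ p ∈ order2Index N, order2Term L p

lemma poissonOrderK_two_natCast_s19 (L : ℝ) (N : ℕ) :
    poissonOrderK 2 L N = exp (-(2 * L)) * order2Coeff L N := by
  rw [poissonOrderK, ← (piFinTwoEquiv fun _ => ℕ).symm.tsum_eq, order2Coeff, mul_sum,
    tsum_eq_sum (s := order2Index N)]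
  · refine sum_congr rfl fun p hp => ?_
    rw [mem_order2Index] at hp
    simp [Fin.sum_univ_two, Fin.prod_univ_two, order2Term, hp, mul_div_assoc]
  · intro p hp
    rw [mem_order2Index] at hp
    rw [if_neg (by simpa [Fin.sum_univ_two] using (mod_cast hp : ¬((p.1 + 2 * p.2 : ℕ) : ℤ) = N))]

section order2Coeff

variable (L : ℝ)

lemma succ_mul_order2Term_succ_fst (a b : ℕ) :
    (a + 1 : ℝ) * order2Term L (a + 1, b) = L * order2Term L (a, b) := by
  simp only [order2Term, Nat.factorial_succ]
  push_cast
  field_simp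
  ring

lemma succ_mul_order2Term_succ_snd (a b : ℕ) :
    (b + 1 : ℝ) * order2Term L (a, b + 1) = L * order2Term L (a, b) := by
  simp only [order2Term, Nat.factorial_succ]
  push_cast
  field_simp
  ring

lemma sum_order2Index_fst_mul (M : ℕ) :
    ∑ p ∈ order2Index (M + 1), (p.1 : ℝ) * order2Term L p = L * order2Coeff L M := by
  rw [sum_order2Index_shift M 1 0 fun p hp => by simp [show p.1 = 0 by omega]]
  simp [order2Coeff, mul_sum, succ_mul_order2Term_succ_fst]

lemma sum_order2Index_snd_mul (M : ℕ) :
    ∑ p ∈ order2Index (M + 2), (p.2 : ℝ) * order2Term L p = L * order2Coeff L M := by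
  rw [sum_order2Index_shift M 0 1 fun p hp => by simp [show p.2 = 0 by omega]]
  simp [order2Coeff, mul_sum, succ_mul_order2Term_succ_snd]

lemma order2Coeff_recurrence (M : ℕ) :
    (M + 2 : ℝ) * order2Coeff L (M + 2) = L * order2Coeff L (M + 1) + 2 * L * order2Coeff L M := by
  calc (M + 2 : ℝ) * order2Coeff L (M + 2)
      = ∑ p ∈ order2Index (M + 2), ((p.1 : ℝ) * order2Term L p + 2 * ((p.2 : ℝ) * order2Term L p)) := by
        rw [order2Coeff, mul_sum]
        refine sum_congr rfl fun p hp => ?_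
        have : (p.1 : ℝ) + 2 * p.2 = M + 2 := by exact_mod_cast mem_order2Index.1 hp
        linear_combination -this * order2Term L p
    _ = _ := by
        rw [sum_add_distrib, ← mul_sum, sum_order2Index_fst_mul, sum_order2Index_snd_mul]
        ring

lemma order2Coeff_zero : order2Coeff L 0 = 1 := by
  simp [order2Coeff, order2Term, show order2Index 0 = {(0, 0)} by decide]

lemma order2Coeff_one : order2Coeff L 1 = L := by
  simp [order2Coeff, order2Term, show order2Index 1 = {(1, 0)} by decide]

variable {L}

lemma order2Coeff_pos (hL : 0 < L) (N : ℕ) : 0 < order2Coeff L N :=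
  sum_pos (fun p _ => by unfold order2Term; positivity) ⟨(N, 0), by simp⟩

end order2Coeff

noncomputable def order2Ratio (L : ℝ) (m : ℕ) : ℝ :=
  (m + 1) * order2Coeff L (m + 1) / order2Coeff L m

section order2Ratio

variable {L : ℝ}

lemma order2Ratio_zero : order2Ratio L 0 = L := by
  simp [order2Ratio, order2Coeff_zero, order2Coeff_one]

lemma order2Ratio_succ (hL : 0 < L) (m : ℕ) :
    order2Ratio L (m + 1) = L + 2 * L * (m + 1) / order2Ratio L m := by
  have h0 := order2Coeff_pos hL m
  have h1 := order2Coeff_pos hL (m + 1)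
  have hrec := order2Coeff_recurrence L m
  simp only [order2Ratio]
  push_cast
  field_simp
  linear_combination hrec

lemma order2Ratio_one (hL : 0 < L) : order2Ratio L 1 = L + 2 := by
  rw [order2Ratio_succ hL, order2Ratio_zero]
  field_simp
  ring

lemma order2Ratio_pos (hL : 0 < L) (m : ℕ) : 0 < order2Ratio L m := by
  unfold order2Ratio
  have := order2Coeff_pos hL m
  have := order2Coeff_pos hL (m + 1)
  positivity

lemma posRoot_le_order2Ratio_succ (hL : 0 < L) {m : ℕ} (h : order2Ratio L m ≤ posRoot L (m + 1)) :
    posRoot L (m + 1) ≤ order2Ratio L (m + 1) := by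
  have hm : (0 : ℝ) ≤ m + 1 := by positivity
  calc posRoot L (m + 1) = L + 2 * L * (m + 1) / posRoot L (m + 1) := (add_div_posRoot hL hm).symm
    _ ≤ L + 2 * L * (m + 1) / order2Ratio L m := by
        gcongr
        exact order2Ratio_pos hL m
    _ = order2Ratio L (m + 1) := (order2Ratio_succ hL m).symm

lemma order2Ratio_le_posRoot (hL : 2 ≤ L) (m : ℕ) : order2Ratio L m ≤ posRoot L (m + 1) := by
  have hL0 : 0 < L := by linarith
  induction m using Nat.twoStepInduction with
  | zero =>
    apply le_posRoot_of_sq_le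
    rw [order2Ratio_zero]
    nlinarith
  | one =>
    apply le_posRoot_of_sq_le
    rw [order2Ratio_one hL0]
    push_cast
    nlinarith
  | more m ih _ =>
    have hm : (0 : ℝ) ≤ m + 1 := by positivity
    have hlow := posRoot_le_order2Ratio_succ hL0 ih
    have htwo : 2 ≤ posRoot L (m + 1) := le_posRoot_of_sq_le (by nlinarith)
    calc order2Ratio L (m + 2) = L + 2 * L * ((m + 1 : ℕ) + 1) / order2Ratio L (m + 1) :=
          order2Ratio_succ hL0 (m + 1)
      _ ≤ L + 2 * L * ((m + 1) + 1) / posRoot L (m + 1) := by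
          push_cast
          gcongr
      _ ≤ posRoot L ((m + 1) + 2) := add_div_posRoot_le hL0 hm htwo
      _ = posRoot L ((m + 2 : ℕ) + 1) := by push_cast; ring_nf

lemma order2Coeff_lt_succ_of_lt_order2Ratio (hL : 0 < L) {m : ℕ} (h : (m + 1 : ℝ) < order2Ratio L m) :
    order2Coeff L m < order2Coeff L (m + 1) := by
  have h0 := order2Coeff_pos hL m
  rw [order2Ratio, lt_div_iff₀ h0] at h
  exact lt_of_mul_lt_mul_left h (by positivity)

end order2Ratio

lemma lt_order2Ratio_three_mul_sub_two (lam : ℕ) (hlam : 1 ≤ lam) :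
    ((3 * lam - 2 : ℕ) + 1 : ℝ) < order2Ratio lam (3 * lam - 2) := by
  obtain rfl | hlam2 := eq_or_lt_of_le hlam
  · norm_num [order2Ratio_one]
  obtain ⟨m, hm⟩ := Nat.exists_eq_add_one_of_ne_zero (by omega : 3 * lam - 2 ≠ 0)
  have hL : (2 : ℝ) ≤ lam := by exact_mod_cast hlam2
  have hmL : (m : ℝ) + 1 = 3 * lam - 2 := by
    have : (m : ℝ) + 3 = 3 * lam := by exact_mod_cast (by omega : m + 3 = 3 * lam)
    linarith
  rw [hm]
  calc ((m + 1 : ℕ) + 1 : ℝ) < posRoot lam (m + 1) := by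
        apply lt_posRoot_of_sq_lt
        push_cast
        rw [hmL]
        nlinarith
    _ ≤ order2Ratio lam (m + 1) :=
        posRoot_le_order2Ratio_succ (by linarith) (order2Ratio_le_posRoot hL m)

theorem poissonOrder2_delta_pos (lam : ℕ) (hlam : 1 ≤ lam) :
    0 < poissonOrderK 2 (lam : ℝ) (3 * (lam : ℤ) - 1)
        - poissonOrderK 2 (lam : ℝ) (3 * (lam : ℤ) - 2) := by
  have hidx1 : 3 * (lam : ℤ) - 1 = ((3 * lam - 2 + 1 : ℕ) : ℤ) := by omega
  have hidx2 : 3 * (lam : ℤ) - 2 = ((3 * lam - 2 : ℕ) : ℤ) := by omega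
  rw [hidx1, hidx2, poissonOrderK_two_natCast_s19, poissonOrderK_two_natCast_s19, ← mul_sub]
  have hL : (0 : ℝ) < lam := by exact_mod_cast hlam
  exact mul_pos (exp_pos _)
    (sub_pos.2 (order2Coeff_lt_succ_of_lt_order2Ratio hL (lt_order2Ratio_three_mul_sub_two lam hlam)))
end
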